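/- arXiv:2108.03282 — 6 statements merged into one kernel-verified Lean document; each statement's English description precedes it below -/
import Mathlib

section
/- Let B be a family of blocks in a monoid M with parameter type Θ. Let j, m, n be natural numbers with 1 ≤ j ≤ m < n. Then for every parameter assignment θ for the cascade C_{j,n} and every α ∈ Θ, there exist α' ∈ Θ and a parameter assignment θ' such that C_{j,n}(θ) * B m α = B (m+1) α' * C_{j,n}(θ'). -/
/-- The cascade `C_{i,j}(θ) = B i (θ i) * B (i+1) (θ (i+1)) * ⋯ * B j (θ j)`. -/
def cascade {M Θ : Type*} [Monoid M] (B : ℕ → Θ → M) (i j : ℕ) (θ : ℕ → Θ) : M :=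
  ((List.range (j + 1 - i)).map (fun k => B (i + k) (θ (i + k)))).prod

/-!
Write the cascade as `X * (B m (θ m) * B (m+1) (θ (m+1))) * Y`, where `X` collects the blocks of
index `< m` and `Y` those of index `> m + 1`. Commutation moves `B m α` leftwards past `Y`, turnover
rewrites `B m (θ m) * B (m+1) (θ (m+1)) * B m α` as `B (m+1) a * B m b * B (m+1) c`, and commutation
moves `B (m+1) a` leftwards past `X`. What remains is the cascade with `θ m, θ (m+1)` replaced by
`b, c`.
-/

theorem mul_mul_mul_eq_mul_of_commute {M : Type*} [Monoid M] {x y u v w z : M}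
    (hx : Commute x w) (hy : Commute y v) (h : u * v = w * z) :
    x * u * y * v = w * (x * z * y) :=
  calc x * u * y * v = x * (u * v) * y := by rw [mul_assoc _ y, hy.eq]; simp only [mul_assoc]
    _ = w * (x * z * y) := by rw [h, ← mul_assoc x, hx.eq]; simp only [mul_assoc]

namespace Cascade

variable {M Θ : Type*} [Monoid M] (B : ℕ → Θ → M)

/-- The product of the blocks of index `s, …, s + len - 1`. Indexing by length avoids writing the
block before `B m` as ending at `m - 1`, which truncates at `m = 0`. -/
def blockProd (θ : ℕ → Θ) (s len : ℕ) : M :=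
  ((List.range' s len).map fun k => B k (θ k)).prod

theorem cascade_eq_blockProd (i j : ℕ) (θ : ℕ → Θ) :
    cascade B i j θ = blockProd B θ i (j + 1 - i) := by
  simp [cascade, blockProd, List.range'_eq_map_range, Function.comp_def]

theorem blockProd_add (θ : ℕ → Θ) (s a b : ℕ) :
    blockProd B θ s (a + b) = blockProd B θ s a * blockProd B θ (s + a) b := by
  rw [blockProd, ← List.range'_append, List.map_append, List.prod_append]
  simp [blockProd]

theorem blockProd_two (θ : ℕ → Θ) (s : ℕ) :
    blockProd B θ s 2 = B s (θ s) * B (s + 1) (θ (s + 1)) := by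
  simp [blockProd, List.range'_succ]

theorem blockProd_congr {θ θ' : ℕ → Θ} {s len : ℕ}
    (h : ∀ k, s ≤ k → k < s + len → θ k = θ' k) :
    blockProd B θ s len = blockProd B θ' s len := by
  unfold blockProd
  congr 1
  refine List.map_congr_left fun k hk => ?_
  rw [List.mem_range'_1] at hk
  rw [h k hk.1 hk.2]

theorem commute_blockProd {θ : ℕ → Θ} {s len : ℕ} {x : M}
    (h : ∀ k β, s ≤ k → k < s + len → Commute (B k β) x) :
    Commute (blockProd B θ s len) x := by
  refine Commute.list_prod_left _ _ fun y hy => ?_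
  obtain ⟨k, hk, rfl⟩ := List.mem_map.1 hy
  rw [List.mem_range'_1] at hk
  exact h k _ hk.1 hk.2

theorem cascade_eq_blockProd_mul_mul {j m n : ℕ} (hjm : j ≤ m) (hmn : m < n) (θ : ℕ → Θ) :
    cascade B j n θ = blockProd B θ j (m - j) * (B m (θ m) * B (m + 1) (θ (m + 1))) *
      blockProd B θ (m + 2) (n - m - 1) := by
  have hlen : n + 1 - j = m - j + 2 + (n - m - 1) := by omega
  have hm : j + (m - j) = m := by omega
  have hm2 : j + (m - j + 2) = m + 2 := by omega
  rw [cascade_eq_blockProd, hlen, blockProd_add, blockProd_add, hm, hm2, blockProd_two]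

end Cascade

open Cascade Function in
theorem cascade_block_turnover_general {M Θ : Type*} [Monoid M] (B : ℕ → Θ → M)
    (hcomm : ∀ (i j : ℕ), 1 < Nat.dist i j → ∀ (α β : Θ),
      B i α * B j β = B j β * B i α)
    (hturnover : ∀ (i : ℕ) (α β γ : Θ), ∃ a b c : Θ,
      B i α * B (i + 1) β * B i γ = B (i + 1) a * B i b * B (i + 1) c)
    (j m n : ℕ) (hjm : j ≤ m) (hmn : m < n) :
    ∀ (θ : ℕ → Θ) (α : Θ), ∃ (α' : Θ) (θ' : ℕ → Θ),
      cascade B j n θ * B m α = B (m + 1) α' * cascade B j n θ' := by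
  intro θ α
  obtain ⟨a, b, c, habc⟩ := hturnover m (θ m) (θ (m + 1)) α
  let θ' := update (update θ m b) (m + 1) c
  have hθ' : ∀ k, k ≠ m → k ≠ m + 1 → θ' k = θ k := fun k hm hm1 => by
    simp [θ', hm, hm1]
  have hprefix : Commute (blockProd B θ j (m - j)) (B (m + 1) a) :=
    commute_blockProd B fun k β _ hk => hcomm _ _ (by unfold Nat.dist; omega) β a
  have hsuffix : Commute (blockProd B θ (m + 2) (n - m - 1)) (B m α) :=
    commute_blockProd B fun k β hk _ => hcomm _ _ (by unfold Nat.dist; omega) β α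
  have hprefix_eq : blockProd B θ' j (m - j) = blockProd B θ j (m - j) :=
    blockProd_congr B fun k _ hk => hθ' k (by omega) (by omega)
  have hsuffix_eq : blockProd B θ' (m + 2) (n - m - 1) = blockProd B θ (m + 2) (n - m - 1) :=
    blockProd_congr B fun k hk _ => hθ' k (by omega) (by omega)
  refine ⟨a, θ', ?_⟩
  rw [cascade_eq_blockProd_mul_mul B hjm hmn, cascade_eq_blockProd_mul_mul B hjm hmn,
    hprefix_eq, hsuffix_eq, mul_mul_mul_eq_mul_of_commute hprefix hsuffix (by rw [habc, mul_assoc])]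
  simp [θ']

/-- **Lemma 1 (cascade–block turnover).**  Let `B` be a family of blocks in a monoid `M`
(satisfying fusion, commutation and turnover).  For `1 ≤ j ≤ m < n`, a block `B m α` can be
passed through the cascade `C_{j,n}` from right to left, shifting its index up by one. -/
theorem cascade_block_turnover {M Θ : Type*} [Monoid M] (B : ℕ → Θ → M)
    (hfusion : ∀ (i : ℕ) (α β : Θ), ∃ a : Θ, B i α * B i β = B i a)
    (hcomm : ∀ (i j : ℕ), 1 < Nat.dist i j → ∀ (α β : Θ),
      B i α * B j β = B j β * B i α)
    (hturnover : ∀ (i : ℕ) (α β γ : Θ), ∃ a b c : Θ,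
      B i α * B (i + 1) β * B i γ = B (i + 1) a * B i b * B (i + 1) c)
    (j m n : ℕ) (hj : 1 ≤ j) (hjm : j ≤ m) (hmn : m < n) :
    ∀ (θ : ℕ → Θ) (α : Θ), ∃ (α' : Θ) (θ' : ℕ → Θ),
      cascade B j n θ * B m α = B (m + 1) α' * cascade B j n θ' :=
  cascade_block_turnover_general B hcomm hturnover j m n hjm hmn
end

section
/- Let B be a family of blocks in a monoid M with parameter type Θ, and let 1 ≤ m ≤ n. Then for every parameter assignment θ for the triangle T_n and every α ∈ Θ, there exists a parameter assignment θ' such that T_n(θ) * B m α = T_n(θ'); that is, a single block can be fully merged into a triangle of blocks. -/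
/-- The triangle `T_n(θ) = C_{n,n} * C_{n-1,n} * ⋯ * C_{1,n}`, where the `k`-th cascade
`C_{n-k,n}` carries its own parameters `θ k`. -/
def triangle {M Θ : Type*} [Monoid M] (B : ℕ → Θ → M) (n : ℕ) (θ : ℕ → ℕ → Θ) : M :=
  ((List.range n).map (fun k => cascade B (n - k) n (θ k))).prod

open Pointwise

theorem Set.range_list_prod_map_of_nodup {ι α M : Type*} [Monoid M] [Nonempty α]
    (g : ι → α → M) {l : List ι} (hl : l.Nodup) :
    Set.range (fun θ : ι → α => (l.map fun k => g k (θ k)).prod) =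
      (l.map fun k => Set.range (g k)).prod := by
  classical
  induction l with
  | nil => simp [Set.singleton_one]
  | cons a l ih =>
    obtain ⟨ha, hl⟩ := List.nodup_cons.1 hl
    simp only [List.map_cons, List.prod_cons, ← ih hl]
    refine subset_antisymm
      (Set.range_subset_iff.2 fun θ => Set.mul_mem_mul ⟨θ a, rfl⟩ ⟨θ, rfl⟩) ?_
    rintro _ ⟨_, ⟨x, rfl⟩, _, ⟨θ, rfl⟩, rfl⟩
    refine ⟨Function.update θ a x, ?_⟩
    simp only [Function.update_self]
    congr 2
    exact List.map_congr_left fun k hk => by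
      rw [Function.update_of_ne (ne_of_mem_of_not_mem hk ha)]

theorem Set.list_prod_mul_subset_mul_list_prod {M : Type*} [Monoid M] {t : Set M} :
    ∀ {L : List (Set M)}, (∀ s ∈ L, s * t ⊆ t * s) → L.prod * t ⊆ t * L.prod
  | [], _ => by simp
  | s :: L, hL => by
    rw [List.prod_cons]
    calc s * L.prod * t = s * (L.prod * t) := mul_assoc _ _ _
      _ ⊆ s * (t * L.prod) :=
        Set.mul_subset_mul_left <|
          list_prod_mul_subset_mul_list_prod fun s' hs' => hL s' (.tail _ hs')
      _ = s * t * L.prod := (mul_assoc _ _ _).symm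
      _ ⊆ t * s * L.prod := Set.mul_subset_mul_right (hL s (.head _))
      _ = t * (s * L.prod) := mul_assoc _ _ _

section SetCascade

variable {M : Type*} [Monoid M] (S : ℕ → Set M)

def setCascade (i j : ℕ) : Set M :=
  ((List.range (j + 1 - i)).map fun k => S (i + k)).prod

/-- The product `C_{n,n} * C_{n-1,n} * ⋯ * C_{n-d+1,n}` of the top `d` cascades ending at `n`. -/
def setTriangle (n d : ℕ) : Set M :=
  ((List.range d).map fun k => setCascade S (n - k) n).prod

variable {S}

theorem setCascade_of_lt {i j : ℕ} (h : j < i) : setCascade S i j = 1 := by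
  simp [setCascade, Nat.sub_eq_zero_of_le h]

theorem setCascade_eq_mul {i j : ℕ} (h : i ≤ j) :
    setCascade S i j = S i * setCascade S (i + 1) j := by
  rw [setCascade, show j + 1 - i = j + 1 - (i + 1) + 1 by omega, List.range_succ_eq_map]
  simp [setCascade, Function.comp_def, Nat.add_assoc, Nat.add_comm 1]

theorem setCascade_mul_subset_mul_of_forall_mul_subset {t : Set M} {i j : ℕ}
    (h : ∀ k, i ≤ k → S k * t ⊆ t * S k) : setCascade S i j * t ⊆ t * setCascade S i j :=
  Set.list_prod_mul_subset_mul_list_prod <| by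
    simp only [List.mem_map, forall_exists_index, and_imp]
    rintro _ k _ rfl
    exact h _ (Nat.le_add_right i k)

theorem setCascade_mul_subset (hfusion : ∀ i, S i * S i ⊆ S i) {i j : ℕ} (hij : i ≤ j) :
    setCascade S i j * S j ⊆ setCascade S i j := by
  rw [setCascade_eq_mul hij, mul_assoc]
  rcases hij.lt_or_eq with hlt | rfl
  · exact Set.mul_subset_mul_left (setCascade_mul_subset hfusion hlt)
  · rw [setCascade_of_lt (Nat.lt_succ_self i), one_mul, mul_one]
    exact hfusion i
termination_by j - i

theorem setCascade_mul_subset_mul (hcomm : ∀ i j, 1 < Nat.dist i j → S i * S j ⊆ S j * S i)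
    (hturnover : ∀ i, S i * S (i + 1) * S i ⊆ S (i + 1) * S i * S (i + 1))
    {i m j : ℕ} (him : i ≤ m) (hmj : m < j) :
    setCascade S i j * S m ⊆ S (m + 1) * setCascade S i j := by
  rcases him.lt_or_eq with hlt | rfl
  · rw [setCascade_eq_mul (him.trans hmj.le)]
    calc S i * setCascade S (i + 1) j * S m = S i * (setCascade S (i + 1) j * S m) :=
          mul_assoc _ _ _
      _ ⊆ S i * (S (m + 1) * setCascade S (i + 1) j) :=
          Set.mul_subset_mul_left (setCascade_mul_subset_mul hcomm hturnover hlt hmj)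
      _ = S i * S (m + 1) * setCascade S (i + 1) j := (mul_assoc _ _ _).symm
      _ ⊆ S (m + 1) * S i * setCascade S (i + 1) j :=
          Set.mul_subset_mul_right (hcomm i (m + 1) (by unfold Nat.dist; omega))
      _ = S (m + 1) * (S i * setCascade S (i + 1) j) := mul_assoc _ _ _
  · rw [setCascade_eq_mul hmj.le, setCascade_eq_mul hmj]
    have htail : setCascade S (i + 1 + 1) j * S i ⊆ S i * setCascade S (i + 1 + 1) j :=
      setCascade_mul_subset_mul_of_forall_mul_subset fun k hk =>
        hcomm _ _ (by unfold Nat.dist; omega)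
    calc S i * (S (i + 1) * setCascade S (i + 1 + 1) j) * S i
          = S i * S (i + 1) * (setCascade S (i + 1 + 1) j * S i) := by simp only [mul_assoc]
      _ ⊆ S i * S (i + 1) * (S i * setCascade S (i + 1 + 1) j) := Set.mul_subset_mul_left htail
      _ = S i * S (i + 1) * S i * setCascade S (i + 1 + 1) j := by simp only [mul_assoc]
      _ ⊆ S (i + 1) * S i * S (i + 1) * setCascade S (i + 1 + 1) j :=
          Set.mul_subset_mul_right (hturnover i)
      _ = S (i + 1) * (S i * (S (i + 1) * setCascade S (i + 1 + 1) j)) := by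
          simp only [mul_assoc]
termination_by m - i

theorem setTriangle_succ (n d : ℕ) :
    setTriangle S n (d + 1) = setTriangle S n d * setCascade S (n - d) n := by
  simp [setTriangle, List.range_succ]

theorem setTriangle_mul_subset (hfusion : ∀ i, S i * S i ⊆ S i)
    (hcomm : ∀ i j, 1 < Nat.dist i j → S i * S j ⊆ S j * S i)
    (hturnover : ∀ i, S i * S (i + 1) * S i ⊆ S (i + 1) * S i * S (i + 1)) {n : ℕ} :
    ∀ {d m : ℕ}, n + 1 - d ≤ m → m ≤ n → setTriangle S n d * S m ⊆ setTriangle S n d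
  | 0, _, hdm, hmn => by omega
  | d + 1, m, hdm, hmn => by
    rw [setTriangle_succ, mul_assoc]
    rcases hmn.lt_or_eq with hlt | rfl
    · calc setTriangle S n d * (setCascade S (n - d) n * S m)
            ⊆ setTriangle S n d * (S (m + 1) * setCascade S (n - d) n) :=
            Set.mul_subset_mul_left (setCascade_mul_subset_mul hcomm hturnover (by omega) hlt)
        _ = setTriangle S n d * S (m + 1) * setCascade S (n - d) n := (mul_assoc _ _ _).symm
        _ ⊆ setTriangle S n d * setCascade S (n - d) n :=
            Set.mul_subset_mul_right <|
              setTriangle_mul_subset hfusion hcomm hturnover (by omega) hlt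
    · exact Set.mul_subset_mul_left (setCascade_mul_subset hfusion (Nat.sub_le _ _))

end SetCascade

section Blocks

variable {M Θ : Type*} [Monoid M] [Nonempty Θ] (B : ℕ → Θ → M)

theorem range_cascade (i j : ℕ) :
    Set.range (cascade B i j) = setCascade (fun k => Set.range (B k)) i j := by
  have hnodup : ((List.range (j + 1 - i)).map (i + ·)).Nodup :=
    List.nodup_range.map (add_right_injective i)
  unfold cascade setCascade
  simpa [List.map_map, Function.comp_def] using
    Set.range_list_prod_map_of_nodup (fun k => B k) hnodup

theorem range_triangle (n : ℕ) :
    Set.range (triangle B n) = setTriangle (fun k => Set.range (B k)) n n := by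
  simp only [setTriangle, ← range_cascade]
  exact Set.range_list_prod_map_of_nodup (fun k => cascade B (n - k) n) List.nodup_range

end Blocks

/-- **Theorem (block into triangle).**  Let `B` be a family of blocks in a monoid `M`
(satisfying fusion, commutation and turnover) and `1 ≤ m ≤ n`.  A single block `B m α`
can be fully merged into a triangle of height `n`. -/
theorem block_merges_into_triangle {M Θ : Type*} [Monoid M] (B : ℕ → Θ → M)
    (hfusion : ∀ (i : ℕ) (α β : Θ), ∃ a : Θ, B i α * B i β = B i a)
    (hcomm : ∀ (i j : ℕ), 1 < Nat.dist i j → ∀ (α β : Θ),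
      B i α * B j β = B j β * B i α)
    (hturnover : ∀ (i : ℕ) (α β γ : Θ), ∃ a b c : Θ,
      B i α * B (i + 1) β * B i γ = B (i + 1) a * B i b * B (i + 1) c)
    (m n : ℕ) (hm : 1 ≤ m) (hmn : m ≤ n) :
    ∀ (θ : ℕ → ℕ → Θ) (α : Θ), ∃ θ' : ℕ → ℕ → Θ,
      triangle B n θ * B m α = triangle B n θ' := by
  intro θ α
  have : Nonempty Θ := ⟨α⟩
  set S : ℕ → Set M := fun k => Set.range (B k)
  have hfusion' : ∀ i, S i * S i ⊆ S i := by
    rintro i _ ⟨_, ⟨a, rfl⟩, _, ⟨b, rfl⟩, rfl⟩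
    obtain ⟨c, hc⟩ := hfusion i a b
    exact ⟨c, hc.symm⟩
  have hcomm' : ∀ i j, 1 < Nat.dist i j → S i * S j ⊆ S j * S i := by
    rintro i j hij _ ⟨_, ⟨a, rfl⟩, _, ⟨b, rfl⟩, rfl⟩
    exact ⟨_, ⟨b, rfl⟩, _, ⟨a, rfl⟩, (hcomm i j hij a b).symm⟩
  have hturnover' : ∀ i, S i * S (i + 1) * S i ⊆ S (i + 1) * S i * S (i + 1) := by
    rintro i _ ⟨_, ⟨_, ⟨a, rfl⟩, _, ⟨b, rfl⟩, rfl⟩, _, ⟨c, rfl⟩, rfl⟩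
    obtain ⟨a', b', c', h⟩ := hturnover i a b c
    exact ⟨_, ⟨_, ⟨a', rfl⟩, _, ⟨b', rfl⟩, rfl⟩, _, ⟨c', rfl⟩, h.symm⟩
  have hmerge := setTriangle_mul_subset hfusion' hcomm' hturnover' (n := n) (d := n)
    (by omega) hmn
  rw [← range_triangle] at hmerge
  obtain ⟨θ', hθ'⟩ := hmerge (Set.mul_mem_mul ⟨θ, rfl⟩ ⟨α, rfl⟩)
  exact ⟨θ', hθ'.symm⟩
end

section
/- Let B be a family of blocks in a monoid M with parameter type Θ and let n ≥ 1. For every parameter assignment θ for the triangle T_n and every parameter assignment φ for the cascade C_{1,n}, there exists a parameter assignment ψ such that T_n(θ) * C_{1,n}(φ) = T_n(ψ); that is, a triangle of height n and a cascade of height n can be merged into a triangle of height n. -/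
/-!
Two cascades `C_{i,j}` merge into `C_{i+1,j} * C_{i,j}`: turnover rewrites the leading
`B i * B (i+1) * B i` as `B (i+1) * B i * B (i+1)`, commutation moves the blocks `B i` past
the cascades starting at `i + 2`, and the two cascades starting at `i + 1` that remain merge by
induction on `j - i` (fusion is the case `i = j`). A triangle absorbs `C_{1,n}` from its last
cascade upwards: its cascade `C_{k,n}` swallows the incoming `C_{k,n}` and hands `C_{k+1,n}` on
to the cascade before it, until `C_{n,n}` hands on the empty cascade `C_{n+1,n}`.
-/

structure IsBlockFamily {M Θ : Type*} [Monoid M] (B : ℕ → Θ → M) : Prop where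
  fusion : ∀ (i : ℕ) (α β : Θ), ∃ a : Θ, B i α * B i β = B i a
  comm : ∀ (i j : ℕ), 1 < Nat.dist i j → ∀ (α β : Θ), B i α * B j β = B j β * B i α
  turnover : ∀ (i : ℕ) (α β γ : Θ), ∃ a b c : Θ,
    B i α * B (i + 1) β * B i γ = B (i + 1) a * B i b * B (i + 1) c

section Cascade

variable {M Θ : Type*} [Monoid M] (B : ℕ → Θ → M)

lemma cascade_of_lt {i j : ℕ} (h : j < i) (θ : ℕ → Θ) : cascade B i j θ = 1 := by
  simp [cascade, Nat.sub_eq_zero_of_le h]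

lemma cascade_self (i : ℕ) (θ : ℕ → Θ) : cascade B i i θ = B i (θ i) := by
  simp [cascade]

lemma cascade_eq_mul_cascade_succ {i j : ℕ} (h : i ≤ j) (θ : ℕ → Θ) :
    cascade B i j θ = B i (θ i) * cascade B (i + 1) j θ := by
  rw [cascade, show j + 1 - i = j + 1 - (i + 1) + 1 by omega, List.range_succ_eq_map]
  simp only [List.map_cons, List.map_map, List.prod_cons, add_zero, cascade]
  congr 3
  ext k
  rw [Function.comp_apply, show i + (k + 1) = i + 1 + k by omega]

lemma cascade_congr {i j : ℕ} {θ θ' : ℕ → Θ} (h : ∀ k, i ≤ k → θ k = θ' k) :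
    cascade B i j θ = cascade B i j θ' := by
  unfold cascade
  congr 1
  exact List.map_congr_left fun k _ => by rw [h (i + k) (Nat.le_add_right _ _)]

lemma cascade_update_self {i j : ℕ} (h : i ≤ j) (θ : ℕ → Θ) (x : Θ) :
    cascade B i j (Function.update θ i x) = B i x * cascade B (i + 1) j θ := by
  rw [cascade_eq_mul_cascade_succ B h, Function.update_self,
    cascade_congr B fun k hk => Function.update_of_ne (by omega) _ _]

def partialTriangle (n m : ℕ) (θ : ℕ → ℕ → Θ) : M :=
  ((List.range m).map (fun k => cascade B (n - k) n (θ k))).prod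

lemma partialTriangle_self (n : ℕ) (θ : ℕ → ℕ → Θ) :
    partialTriangle B n n θ = triangle B n θ :=
  rfl

lemma partialTriangle_succ (n m : ℕ) (θ : ℕ → ℕ → Θ) :
    partialTriangle B n (m + 1) θ = partialTriangle B n m θ * cascade B (n - m) n (θ m) := by
  simp [partialTriangle, List.range_succ]

lemma partialTriangle_congr (n m : ℕ) {θ θ' : ℕ → ℕ → Θ} (h : ∀ k < m, θ k = θ' k) :
    partialTriangle B n m θ = partialTriangle B n m θ' := by
  unfold partialTriangle
  congr 1
  exact List.map_congr_left fun k hk => by rw [h k (List.mem_range.mp hk)]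

end Cascade

namespace IsBlockFamily

variable {M Θ : Type*} [Monoid M] {B : ℕ → Θ → M}

lemma commute_cascade (hB : IsBlockFamily B) {k i j : ℕ} (h : k + 1 < i) (γ : Θ) (θ : ℕ → Θ) :
    Commute (B k γ) (cascade B i j θ) := by
  refine Commute.list_prod_right _ _ fun x hx => ?_
  obtain ⟨t, -, rfl⟩ := List.mem_map.mp hx
  exact hB.comm k (i + t) (by simp only [Nat.dist]; omega) γ (θ (i + t))

theorem cascade_mul_cascade (hB : IsBlockFamily B) {i j : ℕ} (hij : i ≤ j) (α β : ℕ → Θ) :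
    ∃ a b : ℕ → Θ,
      cascade B i j α * cascade B i j β = cascade B (i + 1) j a * cascade B i j b := by
  obtain rfl | hij := hij.eq_or_lt
  · obtain ⟨c, hc⟩ := hB.fusion i (α i) (β i)
    exact ⟨α, fun _ => c, by
      rw [cascade_self, cascade_self, cascade_self, cascade_of_lt B (Nat.lt_succ_self i), hc,
        one_mul]⟩
  obtain ⟨a, b, c, hturn⟩ := hB.turnover i (α i) (α (i + 1)) (β i)
  obtain ⟨a', b', hmerge⟩ :=
    hB.cascade_mul_cascade (i := i + 1) (j := j) hij (Function.update α (i + 1) c) β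
  rw [cascade_update_self B hij] at hmerge
  refine ⟨Function.update a' (i + 1) a, Function.update b' i b, ?_⟩
  rw [cascade_update_self B hij, cascade_update_self B hij.le,
    cascade_eq_mul_cascade_succ B hij.le α, cascade_eq_mul_cascade_succ B hij α,
    cascade_eq_mul_cascade_succ B hij.le β]
  calc B i (α i) * (B (i + 1) (α (i + 1)) * cascade B (i + 2) j α) *
        (B i (β i) * cascade B (i + 1) j β)
      = B i (α i) * B (i + 1) (α (i + 1)) * B i (β i) *
          (cascade B (i + 2) j α * cascade B (i + 1) j β) := by
        rw [mul_assoc (B i (α i)), mul_assoc, mul_assoc, ← mul_assoc (cascade B (i + 2) j α),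
          ← (hB.commute_cascade (by omega) (β i) α).eq]
        simp only [mul_assoc]
    _ = B (i + 1) a * B i b * (B (i + 1) c * cascade B (i + 2) j α * cascade B (i + 1) j β) := by
        rw [hturn]; simp only [mul_assoc]
    _ = B (i + 1) a * B i b * (cascade B (i + 2) j a' * cascade B (i + 1) j b') := by
        rw [hmerge]
    _ = B (i + 1) a * cascade B (i + 2) j a' * (B i b * cascade B (i + 1) j b') := by
        rw [mul_assoc, ← mul_assoc (B i b), (hB.commute_cascade (by omega) b a').eq]
        simp only [mul_assoc]
termination_by j - i

theorem partialTriangle_mul_cascade (hB : IsBlockFamily B) {n m : ℕ} (hm : m ≤ n)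
    (θ : ℕ → ℕ → Θ) (φ : ℕ → Θ) :
    ∃ ψ : ℕ → ℕ → Θ,
      partialTriangle B n m θ * cascade B (n + 1 - m) n φ = partialTriangle B n m ψ := by
  induction m generalizing φ with
  | zero => exact ⟨θ, by rw [cascade_of_lt B (by omega), mul_one]⟩
  | succ m ih =>
    obtain ⟨a, b, hab⟩ := hB.cascade_mul_cascade (i := n - m) (j := n) (by omega) (θ m) φ
    obtain ⟨ψ, hψ⟩ := ih (by omega) a
    refine ⟨Function.update ψ m b, ?_⟩
    rw [partialTriangle_succ, partialTriangle_succ, Function.update_self,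
      partialTriangle_congr B (θ := Function.update ψ m b) n m
        fun k hk => Function.update_of_ne hk.ne _ _,
      show n + 1 - (m + 1) = n - m by omega, mul_assoc, hab, ← mul_assoc,
      show n - m + 1 = n + 1 - m by omega, hψ]

end IsBlockFamily

theorem triangle_absorbs_cascade_general {M Θ : Type*} [Monoid M] (B : ℕ → Θ → M)
    (hfusion : ∀ (i : ℕ) (α β : Θ), ∃ a : Θ, B i α * B i β = B i a)
    (hcomm : ∀ (i j : ℕ), 1 < Nat.dist i j → ∀ (α β : Θ),
      B i α * B j β = B j β * B i α)
    (hturnover : ∀ (i : ℕ) (α β γ : Θ), ∃ a b c : Θ,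
      B i α * B (i + 1) β * B i γ = B (i + 1) a * B i b * B (i + 1) c)
    (n : ℕ) :
    ∀ (θ : ℕ → ℕ → Θ) (φ : ℕ → Θ), ∃ ψ : ℕ → ℕ → Θ,
      triangle B n θ * cascade B 1 n φ = triangle B n ψ := by
  intro θ φ
  have hB : IsBlockFamily B := ⟨hfusion, hcomm, hturnover⟩
  simpa only [partialTriangle_self, Nat.add_sub_cancel_left] using
    hB.partialTriangle_mul_cascade le_rfl θ φ

/-- **Corollary (triangle absorbs cascade).**  Let `B` be a family of blocks in a monoid `M`
(satisfying fusion, commutation and turnover) and `n ≥ 1`.  A triangle of height `n` and a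
cascade `C_{1,n}` can be merged into a triangle of height `n`. -/
theorem triangle_absorbs_cascade {M Θ : Type*} [Monoid M] (B : ℕ → Θ → M)
    (hfusion : ∀ (i : ℕ) (α β : Θ), ∃ a : Θ, B i α * B i β = B i a)
    (hcomm : ∀ (i j : ℕ), 1 < Nat.dist i j → ∀ (α β : Θ),
      B i α * B j β = B j β * B i α)
    (hturnover : ∀ (i : ℕ) (α β γ : Θ), ∃ a b c : Θ,
      B i α * B (i + 1) β * B i γ = B (i + 1) a * B i b * B (i + 1) c)
    (n : ℕ) (hn : 1 ≤ n) :
    ∀ (θ : ℕ → ℕ → Θ) (φ : ℕ → Θ), ∃ ψ : ℕ → ℕ → Θ,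
      triangle B n θ * cascade B 1 n φ = triangle B n ψ :=
  triangle_absorbs_cascade_general B hfusion hcomm hturnover n
end

section
/- For all real numbers a, b, c there exist real numbers α, β, γ such that, as 8×8 complex matrices, exp(−i·a·(X ⊗ X ⊗ I)) · exp(−i·b·(I ⊗ Y ⊗ Y)) · exp(−i·c·(X ⊗ X ⊗ I)) = exp(−i·α·(I ⊗ Y ⊗ Y)) · exp(−i·β·(X ⊗ X ⊗ I)) · exp(−i·γ·(I ⊗ Y ⊗ Y)), where exp denotes the matrix exponential. This is the turnover property for the blocks of the 1D Kitaev chain. -/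
open Matrix
open scoped Kronecker

noncomputable section

/-- The Pauli matrix `X`. -/
def PauliX : Matrix (Fin 2) (Fin 2) ℂ := !![0, 1; 1, 0]

/-- The Pauli matrix `Y`. -/
def PauliY : Matrix (Fin 2) (Fin 2) ℂ := !![0, -Complex.I; Complex.I, 0]

/-- The 2×2 identity matrix. -/
def I2 : Matrix (Fin 2) (Fin 2) ℂ := 1

/-- `expm A` is the matrix exponential of an 8×8 complex matrix. -/
def expm (A : Matrix ((Fin 2 × Fin 2) × Fin 2) ((Fin 2 × Fin 2) × Fin 2) ℂ) :
    Matrix ((Fin 2 × Fin 2) × Fin 2) ((Fin 2 × Fin 2) × Fin 2) ℂ :=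
  NormedSpace.exp A

/-!
`A = X ⊗ X ⊗ I` and `B = I ⊗ Y ⊗ Y` are anticommuting involutions, so `-iA` and `-iB` are
anticommuting square roots of `-1`; sending the quaternion units `i`, `j` to them is an algebra
map `ℍ[ℝ] → M₈(ℂ)`, carrying `cos t + sin t · i` to `exp(-itA)` and `cos t + sin t · j` to
`exp(-itB)`.
The turnover property is therefore the Euler-angle decomposition of unit quaternions:
every unit quaternion `q` equals `(cos α + sin α j)(cos β + sin β i)(cos γ + sin γ j)`, where
`α + γ` and `α - γ` are the arguments of `re q + (imJ q) √-1` and `imI q - (imK q) √-1`, and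
`cos β`, `sin β` are their moduli.
-/

open Quaternion Real

theorem NormedSpace.exp_smul_of_mul_self_eq_neg_one {A : Type*} [NormedRing A]
    [NormedAlgebra ℝ A] [CompleteSpace A] {u : A} (hu : u * u = -1) (t : ℝ) :
    NormedSpace.exp (t • u) = algebraMap ℝ A (cos t) + sin t • u := by
  let f : ℂ →ₐ[ℝ] A := Complex.lift ⟨u, hu⟩
  have hf : Continuous f := f.toLinearMap.continuous_of_finiteDimensional
  have key := NormedSpace.map_exp_of_mem_ball (𝕂 := ℝ) f hf (t * Complex.I)
    (by rw [NormedSpace.expSeries_radius_eq_top]; exact edist_lt_top _ _)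
  rw [← Complex.exp_eq_exp_ℂ, Complex.exp_mul_I] at key
  simpa [f, ← Complex.ofReal_cos, ← Complex.ofReal_sin, Algebra.smul_def] using key.symm

namespace Quaternion

def rotI (t : ℝ) : ℍ[ℝ] := ⟨cos t, sin t, 0, 0⟩

def rotJ (t : ℝ) : ℍ[ℝ] := ⟨cos t, 0, sin t, 0⟩

@[simp] theorem re_rotI (t : ℝ) : (rotI t).re = cos t := rfl
@[simp] theorem imI_rotI (t : ℝ) : (rotI t).imI = sin t := rfl
@[simp] theorem imJ_rotI (t : ℝ) : (rotI t).imJ = 0 := rfl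
@[simp] theorem imK_rotI (t : ℝ) : (rotI t).imK = 0 := rfl
@[simp] theorem re_rotJ (t : ℝ) : (rotJ t).re = cos t := rfl
@[simp] theorem imI_rotJ (t : ℝ) : (rotJ t).imI = 0 := rfl
@[simp] theorem imJ_rotJ (t : ℝ) : (rotJ t).imJ = sin t := rfl
@[simp] theorem imK_rotJ (t : ℝ) : (rotJ t).imK = 0 := rfl

@[simp] theorem normSq_rotI (t : ℝ) : normSq (rotI t) = 1 := by simp [normSq_def']

@[simp] theorem normSq_rotJ (t : ℝ) : normSq (rotJ t) = 1 := by simp [normSq_def']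

theorem rotJ_mul_rotI_mul_rotJ (α β γ : ℝ) :
    rotJ α * rotI β * rotJ γ =
      ⟨cos β * cos (α + γ), sin β * cos (α - γ), cos β * sin (α + γ), -(sin β * sin (α - γ))⟩ := by
  ext <;> simp [cos_add, sin_add, cos_sub, sin_sub] <;> ring

theorem exists_eq_rotJ_mul_rotI_mul_rotJ {q : ℍ[ℝ]} (hq : normSq q = 1) :
    ∃ α β γ : ℝ, q = rotJ α * rotI β * rotJ γ := by
  set u : ℂ := ⟨q.re, q.imJ⟩
  set v : ℂ := ⟨q.imI, -q.imK⟩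
  set p : ℂ := ⟨‖u‖, ‖v‖⟩
  have hp : ‖p‖ = 1 := by
    rw [Complex.norm_def, Real.sqrt_eq_one, Complex.normSq_mk, ← sq, ← sq, Complex.sq_norm,
      Complex.sq_norm, ← hq, normSq_def']
    simp only [u, v, Complex.normSq_mk]
    ring
  have hcos : cos p.arg = ‖u‖ := by simpa [hp] using Complex.norm_mul_cos_arg p
  have hsin : sin p.arg = ‖v‖ := by simpa [hp] using Complex.norm_mul_sin_arg p
  have hsum : (u.arg + v.arg) / 2 + (u.arg - v.arg) / 2 = u.arg := by ring
  have hdiff : (u.arg + v.arg) / 2 - (u.arg - v.arg) / 2 = v.arg := by ring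
  refine ⟨(u.arg + v.arg) / 2, p.arg, (u.arg - v.arg) / 2, ?_⟩
  rw [rotJ_mul_rotI_mul_rotJ, hsum, hdiff, hcos, hsin, Complex.norm_mul_cos_arg,
    Complex.norm_mul_sin_arg, Complex.norm_mul_cos_arg, Complex.norm_mul_sin_arg]
  ext <;> simp [u, v]

section Lift

variable {A : Type*} [Ring A] [Algebra ℝ A]

def liftOfAnticomm (i j : A) (hi : i * i = -1) (hj : j * j = -1) (hij : i * j = -(j * i)) :
    ℍ[ℝ] →ₐ[ℝ] A :=
  QuaternionAlgebra.Basis.liftHom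
    { i := i
      j := j
      k := i * j
      i_mul_i := by rw [hi, neg_smul, one_smul, zero_smul, add_zero]
      j_mul_j := by rw [hj, neg_smul, one_smul]
      i_mul_j := rfl
      j_mul_i := by rw [hij, zero_smul, zero_sub, neg_neg] }

theorem liftOfAnticomm_apply {i j : A} (hi : i * i = -1) (hj : j * j = -1)
    (hij : i * j = -(j * i)) (x : ℍ[ℝ]) :
    liftOfAnticomm i j hi hj hij x =
      algebraMap ℝ A x.re + x.imI • i + x.imJ • j + x.imK • (i * j) :=
  rfl

end Lift

section NormedLift

variable {A : Type*} [NormedRing A] [NormedAlgebra ℝ A] [CompleteSpace A] {i j : A}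

theorem liftOfAnticomm_rotI (hi : i * i = -1) (hj : j * j = -1) (hij : i * j = -(j * i))
    (t : ℝ) :
    liftOfAnticomm i j hi hj hij (rotI t) = NormedSpace.exp (t • i) := by
  simp [liftOfAnticomm_apply, NormedSpace.exp_smul_of_mul_self_eq_neg_one hi]

theorem liftOfAnticomm_rotJ (hi : i * i = -1) (hj : j * j = -1) (hij : i * j = -(j * i))
    (t : ℝ) :
    liftOfAnticomm i j hi hj hij (rotJ t) = NormedSpace.exp (t • j) := by
  simp [liftOfAnticomm_apply, NormedSpace.exp_smul_of_mul_self_eq_neg_one hj]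

end NormedLift

end Quaternion

theorem pauliX_mul_self : PauliX * PauliX = 1 := by
  simp [PauliX, Matrix.one_fin_two]

theorem pauliY_mul_self : PauliY * PauliY = 1 := by
  simp [PauliY, Matrix.one_fin_two]

theorem pauliX_mul_pauliY : PauliX * PauliY = -(PauliY * PauliX) := by
  simp [PauliX, PauliY]

theorem kronecker_XXI_mul_self :
    (PauliX ⊗ₖ PauliX ⊗ₖ I2) * (PauliX ⊗ₖ PauliX ⊗ₖ I2) = 1 := by
  simp only [← mul_kronecker_mul, pauliX_mul_self, I2, mul_one, one_kronecker_one]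

theorem kronecker_IYY_mul_self :
    (I2 ⊗ₖ PauliY ⊗ₖ PauliY) * (I2 ⊗ₖ PauliY ⊗ₖ PauliY) = 1 := by
  simp only [← mul_kronecker_mul, pauliY_mul_self, I2, mul_one, one_kronecker_one]

theorem kronecker_XXI_mul_IYY :
    (PauliX ⊗ₖ PauliX ⊗ₖ I2) * (I2 ⊗ₖ PauliY ⊗ₖ PauliY) =
      -((I2 ⊗ₖ PauliY ⊗ₖ PauliY) * (PauliX ⊗ₖ PauliX ⊗ₖ I2)) := by
  simp only [← mul_kronecker_mul, pauliX_mul_pauliY, I2, mul_one, one_mul]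
  rw [← neg_one_smul ℂ (PauliY * PauliX), kronecker_smul, smul_kronecker, neg_one_smul]

section ComplexAlgebra

variable {A : Type*} [Ring A] [Algebra ℂ A]

theorem neg_I_smul_mul_self {M : A} (hM : M * M = 1) :
    (-Complex.I • M) * (-Complex.I • M) = -1 := by
  simp [smul_smul, hM]

theorem neg_I_smul_mul_neg_I_smul {M N : A} (hMN : M * N = -(N * M)) :
    (-Complex.I • M) * (-Complex.I • N) = -((-Complex.I • N) * (-Complex.I • M)) := by
  simp [smul_smul, hMN]

end ComplexAlgebra

attribute [local instance] Matrix.linftyOpNormedRing Matrix.linftyOpNormedAlgebra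

abbrev kitaevLift : ℍ[ℝ] →ₐ[ℝ] Matrix ((Fin 2 × Fin 2) × Fin 2) ((Fin 2 × Fin 2) × Fin 2) ℂ :=
  liftOfAnticomm (-Complex.I • (PauliX ⊗ₖ PauliX ⊗ₖ I2)) (-Complex.I • (I2 ⊗ₖ PauliY ⊗ₖ PauliY))
    (neg_I_smul_mul_self kronecker_XXI_mul_self) (neg_I_smul_mul_self kronecker_IYY_mul_self)
    (neg_I_smul_mul_neg_I_smul kronecker_XXI_mul_IYY)

theorem expm_XXI_eq_kitaevLift_rotI (t : ℝ) :
    expm ((-Complex.I * (t : ℂ)) • (PauliX ⊗ₖ PauliX ⊗ₖ I2)) = kitaevLift (rotI t) := by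
  rw [liftOfAnticomm_rotI, RCLike.real_smul_eq_coe_smul (K := ℂ), smul_smul, mul_comm]
  -- the `L∞` operator norm induces the product topology that `expm` uses, definitionally
  rfl

theorem expm_IYY_eq_kitaevLift_rotJ (t : ℝ) :
    expm ((-Complex.I * (t : ℂ)) • (I2 ⊗ₖ PauliY ⊗ₖ PauliY)) = kitaevLift (rotJ t) := by
  rw [liftOfAnticomm_rotJ, RCLike.real_smul_eq_coe_smul (K := ℂ), smul_smul, mul_comm]
  rfl

/-- **Turnover property for the 1D Kitaev chain blocks.**
For all real `a, b, c` there exist real `α, β, γ` such that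
`exp(−i a X⊗X⊗I) exp(−i b I⊗Y⊗Y) exp(−i c X⊗X⊗I)
  = exp(−i α I⊗Y⊗Y) exp(−i β X⊗X⊗I) exp(−i γ I⊗Y⊗Y)`. -/
theorem kitaev_turnover (a b c : ℝ) :
    ∃ α β γ : ℝ,
      expm ((-Complex.I * (a : ℂ)) • (PauliX ⊗ₖ PauliX ⊗ₖ I2)) *
      expm ((-Complex.I * (b : ℂ)) • (I2 ⊗ₖ PauliY ⊗ₖ PauliY)) *
      expm ((-Complex.I * (c : ℂ)) • (PauliX ⊗ₖ PauliX ⊗ₖ I2)) =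
      expm ((-Complex.I * (α : ℂ)) • (I2 ⊗ₖ PauliY ⊗ₖ PauliY)) *
      expm ((-Complex.I * (β : ℂ)) • (PauliX ⊗ₖ PauliX ⊗ₖ I2)) *
      expm ((-Complex.I * (γ : ℂ)) • (I2 ⊗ₖ PauliY ⊗ₖ PauliY)) := by
  obtain ⟨α, β, γ, h⟩ :=
    exists_eq_rotJ_mul_rotI_mul_rotJ (q := rotI a * rotJ b * rotI c) (by simp)
  refine ⟨α, β, γ, ?_⟩
  simp only [expm_XXI_eq_kitaevLift_rotI, expm_IYY_eq_kitaevLift_rotJ, ← map_mul, h]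

end
end

section
/- For all real numbers a, b, c there exist real numbers α, β, γ such that the following identity of 2×2 complex matrices holds: [[cos a, −i sin a],[−i sin a, cos a]] · [[e^{−ib}, 0],[0, e^{ib}]] · [[cos c, −i sin c],[−i sin c, cos c]] = [[e^{−iα}, 0],[0, e^{iα}]] · [[cos β, −i sin β],[−i sin β, cos β]] · [[e^{−iγ}, 0],[0, e^{iγ}]]. That is, an X–Z–X Euler decomposition in SU(2) can be rewritten as a Z–X–Z Euler decomposition. -/
/-!
Matrices of the shape `[[x, -i w], [-i w̄, x̄]]` are closed under multiplication, and the real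
`X`- and `Z`-rotations have this shape, so the `X–Z–X` product is such a matrix; taking
determinants gives `‖x‖² + ‖w‖² = 1`. The `Z–X–Z` product with angles `α, β, γ` is the matrix with
`x = cos β · e^{-i(α+γ)}` and `w = sin β · e^{i(γ-α)}`, so it suffices to take `β` with
`(cos β, sin β) = (‖x‖, ‖w‖)` and to solve `α + γ = -arg x`, `γ - α = arg w`.
-/

open Matrix Complex

open scoped ComplexConjugate

noncomputable section

def rotX (θ : ℂ) : Matrix (Fin 2) (Fin 2) ℂ :=
  !![cos θ, -I * sin θ; -I * sin θ, cos θ]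

def rotZ (θ : ℂ) : Matrix (Fin 2) (Fin 2) ℂ :=
  !![exp (-I * θ), 0; 0, exp (I * θ)]

/-- The factor `-I` off the diagonal makes the real `X`-rotations `su2 (cos θ) (sin θ)`. -/
def su2 (x w : ℂ) : Matrix (Fin 2) (Fin 2) ℂ :=
  !![x, -I * w; -I * conj w, conj x]

end

theorem su2_mul_su2 (x w y v : ℂ) :
    su2 x w * su2 y v = su2 (x * y - w * conj v) (x * v + w * conj y) := by
  ext i j
  fin_cases i <;> fin_cases j <;> simp [su2, mul_apply, Fin.sum_univ_two]
  · linear_combination (w * conj v) * I_sq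
  · ring
  · ring
  · linear_combination (conj w * v) * I_sq

theorem det_su2 (x w : ℂ) : (su2 x w).det = ((‖x‖ ^ 2 + ‖w‖ ^ 2 : ℝ) : ℂ) := by
  rw [su2, det_fin_two_of]
  push_cast
  rw [← mul_conj', ← mul_conj']
  linear_combination -(w * conj w) * I_sq

theorem det_rotX (θ : ℂ) : (rotX θ).det = 1 := by
  rw [rotX, det_fin_two_of]
  linear_combination cos_sq_add_sin_sq θ - sin θ ^ 2 * I_sq

theorem det_rotZ (θ : ℂ) : (rotZ θ).det = 1 := by
  rw [rotZ, det_fin_two_of, ← exp_add]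
  simp

theorem rotX_ofReal (θ : ℝ) : rotX θ = su2 (cos θ) (sin θ) := by
  rw [rotX, su2, ← ofReal_cos, ← ofReal_sin, conj_ofReal, conj_ofReal]

theorem rotZ_ofReal (θ : ℝ) : rotZ θ = su2 (exp (-I * θ)) 0 := by
  rw [rotZ, su2, ← exp_conj]
  simp

theorem rotZ_mul_rotX_mul_rotZ (α β γ : ℝ) :
    rotZ α * rotX β * rotZ γ = su2 (cos β * exp (-I * (α + γ))) (sin β * exp (I * (γ - α))) := by
  simp only [rotX_ofReal, rotZ_ofReal, su2_mul_su2]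
  congr 1 <;> simp [← exp_conj, mul_add, mul_sub, exp_add, exp_sub, exp_neg] <;> ring

theorem exists_cos_eq_and_sin_eq {p q : ℝ} (h : p ^ 2 + q ^ 2 = 1) :
    ∃ θ : ℝ, Real.cos θ = p ∧ Real.sin θ = q := by
  have hz : ‖(⟨p, q⟩ : ℂ)‖ = 1 := by
    rw [norm_def, normSq_mk, ← sq, ← sq, h, Real.sqrt_one]
  have hz0 : (⟨p, q⟩ : ℂ) ≠ 0 := norm_ne_zero_iff.mp (by rw [hz]; exact one_ne_zero)
  exact ⟨arg ⟨p, q⟩, by rw [cos_arg hz0, hz, div_one], by rw [sin_arg, hz, div_one]⟩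

theorem exists_rotZ_mul_rotX_mul_rotZ_eq_su2 {x w : ℂ} (h : ‖x‖ ^ 2 + ‖w‖ ^ 2 = 1) :
    ∃ α β γ : ℝ, rotZ α * rotX β * rotZ γ = su2 x w := by
  obtain ⟨β, hcos, hsin⟩ := exists_cos_eq_and_sin_eq h
  refine ⟨-(arg x + arg w) / 2, β, (arg w - arg x) / 2, ?_⟩
  rw [rotZ_mul_rotX_mul_rotZ, ← ofReal_cos, ← ofReal_sin, hcos, hsin]
  congr 1
  · conv_rhs => rw [← norm_mul_exp_arg_mul_I x]
    push_cast; ring_nf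
  · conv_rhs => rw [← norm_mul_exp_arg_mul_I w]
    push_cast; ring_nf

/-- **X–Z–X to Z–X–Z Euler decomposition in SU(2).**
For all real `a, b, c` there exist real `α, β, γ` such that
`exp(−i a X) exp(−i b Z) exp(−i c X) = exp(−i α Z) exp(−i β X) exp(−i γ Z)`,
with the exponentials written out as explicit 2×2 matrices. -/
theorem su2_euler_turnover (a b c : ℝ) :
    ∃ α β γ : ℝ,
      (!![Complex.cos a, -Complex.I * Complex.sin a;
          -Complex.I * Complex.sin a, Complex.cos a] *
       !![Complex.exp (-Complex.I * b), 0; 0, Complex.exp (Complex.I * b)] *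
       !![Complex.cos c, -Complex.I * Complex.sin c;
          -Complex.I * Complex.sin c, Complex.cos c]) =
      (!![Complex.exp (-Complex.I * α), 0; 0, Complex.exp (Complex.I * α)] *
       !![Complex.cos β, -Complex.I * Complex.sin β;
          -Complex.I * Complex.sin β, Complex.cos β] *
       !![Complex.exp (-Complex.I * γ), 0; 0, Complex.exp (Complex.I * γ)]) := by
  obtain ⟨x, w, hxw⟩ : ∃ x w, rotX a * rotZ b * rotX c = su2 x w := by
    simp only [rotX_ofReal, rotZ_ofReal, su2_mul_su2]
    exact ⟨_, _, rfl⟩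
  have hnorm : ‖x‖ ^ 2 + ‖w‖ ^ 2 = 1 := by
    have hdet := congrArg det hxw
    rw [det_mul, det_mul, det_rotX, det_rotZ, det_rotX, det_su2, mul_one, mul_one] at hdet
    exact_mod_cast hdet.symm
  obtain ⟨α, β, γ, h⟩ := exists_rotZ_mul_rotX_mul_rotZ_eq_su2 hnorm
  exact ⟨α, β, γ, hxw.trans h.symm⟩
end

section
/- In the space of 4×4 complex matrices define Q⁺ := (X ⊗ X + Y ⊗ Y)/2, Q⁻ := (X ⊗ X − Y ⊗ Y)/2, R⁺ := (Z ⊗ I + I ⊗ Z)/2, R⁻ := (Z ⊗ I − I ⊗ Z)/2, P⁺ := (X ⊗ Y + Y ⊗ X)/2, and P⁻ := (X ⊗ Y − Y ⊗ X)/2. Then every element of {Q⁻, R⁺, P⁺} commutes with every element of {Q⁺, R⁻, P⁻}; that is, all nine commutators [Q⁻, Q⁺], [Q⁻, R⁻], [Q⁻, P⁻], [R⁺, Q⁺], [R⁺, R⁻], [R⁺, P⁻], [P⁺, Q⁺], [P⁺, R⁻], [P⁺, P⁻] vanish, so the Hamiltonian algebra of the two-site TFXY model splits into two mutually commuting su(2)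 subalgebras. -/
open Matrix
open scoped Kronecker

/-- The Pauli matrix `Z`. -/
def PauliZ : Matrix (Fin 2) (Fin 2) ℂ := !![1, 0; 0, -1]

/-!
Write the two-qubit basis as `|ab⟩`. Each of `Q⁻, R⁺, P⁺` vanishes outside the rows and columns of
the even-parity states `|00⟩, |11⟩`, and each of `Q⁺, R⁻, P⁻` vanishes outside those of the
odd-parity states `|01⟩, |10⟩`. Matrices living on complementary coordinate subspaces multiply to
zero in either order, so in particular they commute.
-/

namespace Matrix

variable {ι R : Type*}

def IsSupportedOn [Zero R] (A : Matrix ι ι R) (p : ι → Prop) : Prop :=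
  ∀ i j, A i j ≠ 0 → p i ∧ p j

theorem IsSupportedOn.smul [MonoidWithZero R] [NoZeroDivisors R] {A : Matrix ι ι R}
    {p : ι → Prop} (hA : A.IsSupportedOn p) (c : R) : (c • A).IsSupportedOn p :=
  fun i j h => hA i j (right_ne_zero_of_mul h)

theorem mul_eq_zero_of_isSupportedOn_compl [Fintype ι] [NonUnitalNonAssocSemiring R]
    {A B : Matrix ι ι R} {p : ι → Prop} (hA : A.IsSupportedOn p)
    (hB : B.IsSupportedOn fun i => ¬ p i) : A * B = 0 := by
  ext i k
  refine Finset.sum_eq_zero fun j _ => ?_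
  by_contra h
  exact (hB j k (right_ne_zero_of_mul h)).1 (hA i j (left_ne_zero_of_mul h)).2

theorem commutator_eq_zero_of_isSupportedOn_compl [Fintype ι] [NonUnitalNonAssocRing R]
    {A B : Matrix ι ι R} {p : ι → Prop} (hA : A.IsSupportedOn p)
    (hB : B.IsSupportedOn fun i => ¬ p i) : A * B - B * A = 0 := by
  have hA' : A.IsSupportedOn fun i => ¬ ¬ p i := fun i j h => by simpa using hA i j h
  rw [mul_eq_zero_of_isSupportedOn_compl hA hB, mul_eq_zero_of_isSupportedOn_compl hB hA',
    sub_zero]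

end Matrix

def EvenParity (i : Fin 2 × Fin 2) : Prop := i.1 = i.2

theorem isSupportedOn_evenParity_XX_sub_YY :
    (PauliX ⊗ₖ PauliX - PauliY ⊗ₖ PauliY).IsSupportedOn EvenParity := by
  rintro ⟨a, b⟩ ⟨c, d⟩
  fin_cases a <;> fin_cases b <;> fin_cases c <;> fin_cases d <;>
    simp [EvenParity, PauliX, PauliY]

theorem isSupportedOn_evenParity_ZI_add_IZ :
    (PauliZ ⊗ₖ I2 + I2 ⊗ₖ PauliZ).IsSupportedOn EvenParity := by
  rintro ⟨a, b⟩ ⟨c, d⟩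
  fin_cases a <;> fin_cases b <;> fin_cases c <;> fin_cases d <;>
    simp [EvenParity, PauliZ, I2]

theorem isSupportedOn_evenParity_XY_add_YX :
    (PauliX ⊗ₖ PauliY + PauliY ⊗ₖ PauliX).IsSupportedOn EvenParity := by
  rintro ⟨a, b⟩ ⟨c, d⟩
  fin_cases a <;> fin_cases b <;> fin_cases c <;> fin_cases d <;>
    simp [EvenParity, PauliX, PauliY]

theorem isSupportedOn_oddParity_XX_add_YY :
    (PauliX ⊗ₖ PauliX + PauliY ⊗ₖ PauliY).IsSupportedOn fun i => ¬ EvenParity i := by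
  rintro ⟨a, b⟩ ⟨c, d⟩
  fin_cases a <;> fin_cases b <;> fin_cases c <;> fin_cases d <;>
    simp [EvenParity, PauliX, PauliY]

theorem isSupportedOn_oddParity_ZI_sub_IZ :
    (PauliZ ⊗ₖ I2 - I2 ⊗ₖ PauliZ).IsSupportedOn fun i => ¬ EvenParity i := by
  rintro ⟨a, b⟩ ⟨c, d⟩
  fin_cases a <;> fin_cases b <;> fin_cases c <;> fin_cases d <;>
    simp [EvenParity, PauliZ, I2]

theorem isSupportedOn_oddParity_XY_sub_YX :
    (PauliX ⊗ₖ PauliY - PauliY ⊗ₖ PauliX).IsSupportedOn fun i => ¬ EvenParity i := by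
  rintro ⟨a, b⟩ ⟨c, d⟩
  fin_cases a <;> fin_cases b <;> fin_cases c <;> fin_cases d <;>
    simp [EvenParity, PauliX, PauliY]

/-- **The two-site TFXY Hamiltonian algebra splits into two commuting su(2)'s.**
With `Q± = (X⊗X ± Y⊗Y)/2`, `R± = (Z⊗I ± I⊗Z)/2`, `P± = (X⊗Y ± Y⊗X)/2`,
every element of `{Q⁻, R⁺, P⁺}` commutes with every element of `{Q⁺, R⁻, P⁻}`. -/
theorem tfxy_two_commuting_su2 :
    let Qp := ((2 : ℂ)⁻¹) • (PauliX ⊗ₖ PauliX + PauliY ⊗ₖ PauliY)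
    let Qm := ((2 : ℂ)⁻¹) • (PauliX ⊗ₖ PauliX - PauliY ⊗ₖ PauliY)
    let Rp := ((2 : ℂ)⁻¹) • (PauliZ ⊗ₖ I2 + I2 ⊗ₖ PauliZ)
    let Rm := ((2 : ℂ)⁻¹) • (PauliZ ⊗ₖ I2 - I2 ⊗ₖ PauliZ)
    let Pp := ((2 : ℂ)⁻¹) • (PauliX ⊗ₖ PauliY + PauliY ⊗ₖ PauliX)
    let Pm := ((2 : ℂ)⁻¹) • (PauliX ⊗ₖ PauliY - PauliY ⊗ₖ PauliX)
    Qm * Qp - Qp * Qm = 0 ∧ Qm * Rm - Rm * Qm = 0 ∧ Qm * Pm - Pm * Qm = 0 ∧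
    Rp * Qp - Qp * Rp = 0 ∧ Rp * Rm - Rm * Rp = 0 ∧ Rp * Pm - Pm * Rp = 0 ∧
    Pp * Qp - Qp * Pp = 0 ∧ Pp * Rm - Rm * Pp = 0 ∧ Pp * Pm - Pm * Pp = 0 := by
  intro Qp Qm Rp Rm Pp Pm
  have hQp := isSupportedOn_oddParity_XX_add_YY.smul (2 : ℂ)⁻¹
  have hQm := isSupportedOn_evenParity_XX_sub_YY.smul (2 : ℂ)⁻¹
  have hRp := isSupportedOn_evenParity_ZI_add_IZ.smul (2 : ℂ)⁻¹
  have hRm := isSupportedOn_oddParity_ZI_sub_IZ.smul (2 : ℂ)⁻¹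
  have hPp := isSupportedOn_evenParity_XY_add_YX.smul (2 : ℂ)⁻¹
  have hPm := isSupportedOn_oddParity_XY_sub_YX.smul (2 : ℂ)⁻¹
  exact ⟨commutator_eq_zero_of_isSupportedOn_compl hQm hQp,
    commutator_eq_zero_of_isSupportedOn_compl hQm hRm,
    commutator_eq_zero_of_isSupportedOn_compl hQm hPm,
    commutator_eq_zero_of_isSupportedOn_compl hRp hQp,
    commutator_eq_zero_of_isSupportedOn_compl hRp hRm,
    commutator_eq_zero_of_isSupportedOn_compl hRp hPm,
    commutator_eq_zero_of_isSupportedOn_compl hPp hQp,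
    commutator_eq_zero_of_isSupportedOn_compl hPp hRm,
    commutator_eq_zero_of_isSupportedOn_compl hPp hPm⟩
end
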